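/- Let R be a commutative ring, L ⊆ M an inclusion of R-modules. Then sK_R(M) ⊆ sK_R(L) ∪ sK_R(M/L). -/

import Mathlib

/-!
Suppose `p` is not a strong Krull prime of `M ⧸ L`, witnessed by a finitely generated `I₀ ≤ p`.
Given a finitely generated `J ≤ p`, apply the property in `M` to `I₀ ⊔ J` to get `z` with
`I₀ ⊔ J ≤ Ann z ≤ p`. Since `I₀` kills the image of `z` in `M ⧸ L`, some `r ∉ p` has `r • z ∈ L`,
and `Ann (r • z) = (Ann z : r)` lies between `J` and `p` because `p` is prime and `r ∉ p`.
-/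

open TensorProduct

/-- `p` is a strong Krull prime of the `R`-module `M`. -/
def IsStrongKrullPrime (R : Type*) [CommRing R] (M : Type*) [AddCommGroup M] [Module R M]
    (p : Ideal R) : Prop :=
  p.IsPrime ∧ ∀ I : Ideal R, I.FG → I ≤ p →
    ∃ z : M, I ≤ LinearMap.ker (LinearMap.toSpanSingleton R M z) ∧
      LinearMap.ker (LinearMap.toSpanSingleton R M z) ≤ p

namespace LinearMap

variable {R M M₂ : Type*} [CommRing R] [AddCommGroup M] [Module R M] [AddCommGroup M₂]
  [Module R M₂]

theorem ker_toSpanSingleton_le_ker_toSpanSingleton_map (f : M →ₗ[R] M₂) (x : M) :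
    ker (toSpanSingleton R M x) ≤ ker (toSpanSingleton R M₂ (f x)) :=
  comp_toSpanSingleton f x ▸ ker_le_ker_comp _ _

theorem ker_toSpanSingleton_submodule (N : Submodule R M) (x : N) :
    ker (toSpanSingleton R N x) = ker (toSpanSingleton R M x) := by
  ext a
  simp only [mem_ker, toSpanSingleton_apply, ← Submodule.coe_eq_zero, Submodule.coe_smul]

theorem mem_ker_toSpanSingleton_mk_iff (N : Submodule R M) (x : M) (a : R) :
    a ∈ ker (toSpanSingleton R (M ⧸ N) (Submodule.Quotient.mk x)) ↔ a • x ∈ N := by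
  rw [mem_ker, toSpanSingleton_apply, ← Submodule.Quotient.mk_smul,
    Submodule.Quotient.mk_eq_zero]

theorem mem_ker_toSpanSingleton_smul_iff (x : M) (a r : R) :
    a ∈ ker (toSpanSingleton R M (r • x)) ↔ a * r ∈ ker (toSpanSingleton R M x) := by
  simp only [mem_ker, toSpanSingleton_apply, mul_smul]

theorem ker_toSpanSingleton_le_ker_toSpanSingleton_smul (x : M) (r : R) :
    ker (toSpanSingleton R M x) ≤ ker (toSpanSingleton R M (r • x)) := fun a ha =>
  (mem_ker_toSpanSingleton_smul_iff x a r).mpr (Ideal.mul_mem_right r _ ha)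

theorem ker_toSpanSingleton_smul_le_of_notMem {p : Ideal R} (hp : p.IsPrime) {x : M} {r : R}
    (hx : ker (toSpanSingleton R M x) ≤ p) (hr : r ∉ p) :
    ker (toSpanSingleton R M (r • x)) ≤ p := fun a ha =>
  (hp.mem_or_mem (hx ((mem_ker_toSpanSingleton_smul_iff x a r).mp ha))).resolve_right hr

end LinearMap

open LinearMap in
theorem stmt_3 {R : Type*} [CommRing R] {M : Type*} [AddCommGroup M] [Module R M]
    (L : Submodule R M) (p : Ideal R) (hp : IsStrongKrullPrime R M p) :
    IsStrongKrullPrime R L p ∨ IsStrongKrullPrime R (M ⧸ L) p := by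
  obtain ⟨hpp, hM⟩ := hp
  refine or_iff_not_imp_right.mpr fun hq => ⟨hpp, fun J hJ hJp => ?_⟩
  obtain ⟨I₀, hI₀, hI₀p, hI₀bad⟩ : ∃ I₀ : Ideal R, I₀.FG ∧ I₀ ≤ p ∧
      ∀ y : M ⧸ L, I₀ ≤ ker (toSpanSingleton R (M ⧸ L) y) →
        ¬ ker (toSpanSingleton R (M ⧸ L) y) ≤ p := by
    simpa [IsStrongKrullPrime, hpp] using hq
  obtain ⟨z, hz, hzp⟩ := hM (I₀ ⊔ J) (Submodule.FG.sup hI₀ hJ) (sup_le hI₀p hJp)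
  obtain ⟨r, hr, hrp⟩ := SetLike.not_le_iff_exists.mp <| hI₀bad (Submodule.Quotient.mk z) <|
    le_sup_left.trans hz |>.trans (ker_toSpanSingleton_le_ker_toSpanSingleton_map L.mkQ z)
  refine ⟨⟨r • z, (mem_ker_toSpanSingleton_mk_iff L z r).mp hr⟩, ?_, ?_⟩ <;>
    rw [ker_toSpanSingleton_submodule]
  · exact le_sup_right.trans hz |>.trans (ker_toSpanSingleton_le_ker_toSpanSingleton_smul z r)
  · exact ker_toSpanSingleton_smul_le_of_notMem hpp hzp hrp
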